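/- Suppose u, v : ℕ → H and μ : ℕ → ℝ form a GCM trajectory with μ_t < 1/L for every t, and suppose Ψ is bounded below. Then there exists a real number Ψ* such that Ψ(u_t) → Ψ* and Ψ(v_t) → Ψ* as t → ∞; i.e., the two objective-value sequences converge to a common limit. -/

import Mathlib

open Filter Topology RealInnerProductSpace

/-- Descent lemma for functions with Lipschitz gradient. -/
lemma descent_lemma {H : Type*} [NormedAddCommGroup H] [InnerProductSpace ℝ H]
    [CompleteSpace H]
    (f : H → ℝ) (gradf : H → H) (L : ℝ) (hL0 : 0 ≤ L)
    (hdiff : ∀ x, HasGradientAt f (gradf x) x)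
    (hlip : ∀ x y, ‖gradf x - gradf y‖ ≤ L * ‖x - y‖)
    (x y : H) : f y ≤ f x + ⟪gradf x, y - x⟫ + L / 2 * ‖y - x‖ ^ 2 := by
  have hgc : Continuous gradf := by
    exact (LipschitzWith.of_dist_le_mul (K := ⟨L, hL0⟩) (fun a b => by
      rw [dist_eq_norm, dist_eq_norm]; exact hlip a b)).continuous
  set c : ℝ → H := fun t => x + t • (y - x) with hc
  have hderiv : ∀ t : ℝ, HasDerivAt (fun t => f (c t)) ⟪gradf (c t), y - x⟫ t := by
    intro t
    have h1 : HasDerivAt c (y - x) t := by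
      simpa [hc] using ((hasDerivAt_id t).smul_const (y - x)).const_add x
    have h2 := ((hdiff (c t)).hasFDerivAt).comp_hasDerivAt t h1
    simp [InnerProductSpace.toDual_apply_apply] at h2; exact h2
  have hcc : Continuous c := by fun_prop
  have hcont : Continuous fun t => ⟪gradf (c t), y - x⟫ :=
    ((hgc.comp hcc).inner continuous_const)
  have hint : ∫ t in (0:ℝ)..1, ⟪gradf (c t), y - x⟫ = f (c 1) - f (c 0) :=
    intervalIntegral.integral_eq_sub_of_hasDerivAt (fun t _ => hderiv t)
      (hcont.intervalIntegrable 0 1)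
  have hc1 : c 1 = y := by simp [hc]
  have hc0 : c 0 = x := by simp [hc]
  have hbnd : ∀ t ∈ Set.Icc (0:ℝ) 1,
      ⟪gradf (c t), y - x⟫ ≤ ⟪gradf x, y - x⟫ + L * ‖y - x‖ ^ 2 * t := by
    intro t ht
    have h3 : ⟪gradf (c t) - gradf x, y - x⟫ ≤ ‖gradf (c t) - gradf x‖ * ‖y - x‖ :=
      real_inner_le_norm _ _
    have h4 : ‖gradf (c t) - gradf x‖ ≤ L * (t * ‖y - x‖) := by
      have := hlip (c t) x
      simpa [hc, norm_smul, abs_of_nonneg ht.1] using this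
    have h5 : ⟪gradf (c t), y - x⟫ = ⟪gradf x, y - x⟫ + ⟪gradf (c t) - gradf x, y - x⟫ := by
      rw [inner_sub_left]; ring
    nlinarith [norm_nonneg (y - x)]
  have hi2 : IntervalIntegrable (fun t => ⟪gradf x, y - x⟫ + L * ‖y - x‖ ^ 2 * t)
      MeasureTheory.volume 0 1 := by
    apply Continuous.intervalIntegrable; fun_prop
  have hmono : ∫ t in (0:ℝ)..1, ⟪gradf (c t), y - x⟫ ≤
      ∫ t in (0:ℝ)..1, (⟪gradf x, y - x⟫ + L * ‖y - x‖ ^ 2 * t) :=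
    intervalIntegral.integral_mono_on (by norm_num) (hcont.intervalIntegrable 0 1) hi2 hbnd
  have hval : ∫ t in (0:ℝ)..1, (⟪gradf x, y - x⟫ + L * ‖y - x‖ ^ 2 * t) =
      ⟪gradf x, y - x⟫ + L * ‖y - x‖ ^ 2 * (1 / 2) := by
    rw [intervalIntegral.integral_add intervalIntegrable_const
        ((by fun_prop : Continuous fun t : ℝ => L * ‖y - x‖ ^ 2 * t).intervalIntegrable 0 1)]
    rw [intervalIntegral.integral_const_mul, integral_id]
    norm_num
  rw [hint, hc0, hc1] at hmono
  rw [hval] at hmono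
  linarith

/-- `uplus` is a prox-output at `(v, μ)`: it is a global minimizer over `H` of
`w ↦ φ(w) + ⟪∇f(v), w − v⟫ + (1/(2μ))‖w − v‖²`. -/
def IsProxOutput {H : Type*} [NormedAddCommGroup H] [InnerProductSpace ℝ H]
    (φ : H → ℝ) (gradf : H → H) (v : H) (μ : ℝ) (uplus : H) : Prop :=
  ∀ w : H,
    φ uplus + ⟪gradf v, uplus - v⟫ + 1 / (2 * μ) * ‖uplus - v‖ ^ 2 ≤
      φ w + ⟪gradf v, w - v⟫ + 1 / (2 * μ) * ‖w - v‖ ^ 2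

/-- along a GCM trajectory with `μ t < 1/L` and `Ψ` bounded below,
the objective sequences `Ψ(u_t)` and `Ψ(v_t)` converge to a common limit `Ψ*`. -/
theorem gcm_objectives_common_limit
    {H : Type*} [NormedAddCommGroup H] [InnerProductSpace ℝ H] [CompleteSpace H]
    (f φ : H → ℝ) (gradf : H → H) (L : ℝ) (hL : 0 < L)
    (hdiff : ∀ x, HasGradientAt f (gradf x) x)
    (hlip : ∀ x y, ‖gradf x - gradf y‖ ≤ L * ‖x - y‖)
    (Ψ : H → ℝ) (hΨ : Ψ = fun x => f x + φ x)
    (u v : ℕ → H) (μ : ℕ → ℝ)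
    (hμpos : ∀ t, 0 < μ t)
    (hcorr : ∀ t, Ψ (v (t + 1)) ≤ Ψ (u t))
    (hprox : ∀ t, IsProxOutput φ gradf (v (t + 1)) (μ t) (u (t + 1)))
    (hμlt : ∀ t, μ t < 1 / L)
    (hbdd : ∃ m : ℝ, ∀ x, m ≤ Ψ x) :
    ∃ Ψstar : ℝ,
      Tendsto (fun t => Ψ (u t)) atTop (𝓝 Ψstar) ∧
        Tendsto (fun t => Ψ (v t)) atTop (𝓝 Ψstar) := by
  obtain ⟨m, hm⟩ := hbdd
  have key : ∀ t, Ψ (u (t + 1)) ≤ Ψ (v (t + 1)) := by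
    intro t
    have hp := hprox t (v (t + 1))
    simp only [sub_self, norm_zero, inner_zero_right] at hp
    norm_num at hp
    rw [(by ring : (μ t)⁻¹ * (1/2) = 1/(2*μ t))] at hp
    have hd := descent_lemma f gradf L hL.le hdiff hlip (v (t + 1)) (u (t + 1))
    have hμ := hμpos t
    have hLμ : L * μ t < 1 := by
      have := hμlt t
      calc L * μ t < L * (1 / L) := by exact mul_lt_mul_of_pos_left this hL
        _ = 1 := by field_simp
    have hcoef : L / 2 - 1 / (2 * μ t) ≤ 0 := by
      rw [div_sub_div _ _ (by norm_num) (by positivity), div_nonpos_iff]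
      right
      constructor
      · nlinarith
      · positivity
    have hn : (0:ℝ) ≤ ‖u (t + 1) - v (t + 1)‖ ^ 2 := by positivity
    have : (L / 2 - 1 / (2 * μ t)) * ‖u (t + 1) - v (t + 1)‖ ^ 2 ≤ 0 :=
      mul_nonpos_of_nonpos_of_nonneg hcoef hn
    simp only [hΨ] at *
    linarith [hp, hd, this]
  have hmonou : ∀ t, Ψ (u (t + 1)) ≤ Ψ (u t) := fun t => (key t).trans (hcorr t)
  have hanti : Antitone fun t => Ψ (u t) := antitone_nat_of_succ_le hmonou
  have hbdd' : BddBelow (Set.range fun t => Ψ (u t)) := ⟨m, fun x ⟨t, ht⟩ => ht ▸ hm _⟩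
  have hu : Tendsto (fun t => Ψ (u t)) atTop (𝓝 (⨅ t, Ψ (u t))) :=
    tendsto_atTop_ciInf hanti hbdd'
  refine ⟨⨅ t, Ψ (u t), hu, ?_⟩
  have hv1 : Tendsto (fun t => Ψ (v (t + 1))) atTop (𝓝 (⨅ t, Ψ (u t))) := by
    refine tendsto_of_tendsto_of_tendsto_of_le_of_le
      (hu.comp (tendsto_add_atTop_nat 1)) hu (fun t => key t) (fun t => hcorr t)
  exact (tendsto_add_atTop_iff_nat 1).1 hv1
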